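/- arXiv:2110.10791 — 6 statements merged into one kernel-verified Lean document; each statement's English description precedes it below -/
import Mathlib

section
/- Suppose P = Pᵀ ∈ ℝ^{2×2} is positive definite and solves the algebraic Riccati equation P(A_c + B_c α_d) + (A_c + B_c α_d)ᵀ P − P B_c B_cᵀ P + Q = 0 for some symmetric positive definite Q ∈ ℝ^{2×2}. Let z̄_d : ℝ → ℝ² be a solution of the desired dynamics z̄_d' = A_c z̄_d + B_c(α_d z̄_d + γ_d y_t), and let z̄ : ℝ → ℝ² be a solution of z̄' = A_c z̄ + B_c(α_d z̄ + γ_d y_t − (1/2) B_cᵀ P (z̄ − z̄_d)). Then z̄(t) − z̄_d(t) → 0 as t → ∞; that is, the averaged state asymptotically approaches the desired trajectory. -/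
open Matrix Filter

private lemma quad_lb (a b d x y : ℝ) (ha : 0 < a) (hd : 0 < d) (hdet : 0 < a*d - b^2) :
    (a*d - b^2)/(a+d) * (x^2 + y^2) ≤ a*x^2 + 2*b*(x*y) + d*y^2 := by
  have htr : 0 < a + d := by linarith
  rw [div_mul_eq_mul_div, div_le_iff₀ htr]
  nlinarith [sq_nonneg (a*x + b*y), sq_nonneg (b*x + d*y)]

private lemma quad_ub (a b d x y : ℝ) (hd : 0 < d) (hdet : 0 < a*d - b^2) :
    a*x^2 + 2*b*(x*y) + d*y^2 ≤ (a+d) * (x^2 + y^2) := by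
  nlinarith [sq_nonneg (d*x - b*y), sq_nonneg y, hd.le]

set_option maxHeartbeats 1000000 in
/-- If `P = Pᵀ` is positive definite and solves the algebraic Riccati equation
`P(A_c + B_c α_d) + (A_c + B_c α_d)ᵀ P − P B_c B_cᵀ P + Q = 0` for some symmetric positive
definite `Q`, `z̄_d` solves the desired dynamics and `z̄` solves the closed-loop averaged
dynamics, then `z̄(t) − z̄_d(t) → 0` as `t → ∞`. -/
theorem averaged_state_tendsto_desired
    (Ac : Matrix (Fin 2) (Fin 2) ℝ) (Bc : Fin 2 → ℝ)
    (hAc : Ac = !![0, 1; 0, 0]) (hBc : Bc = ![0, 1])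
    (αd : Fin 2 → ℝ) (γd yt : ℝ)
    (P Q : Matrix (Fin 2) (Fin 2) ℝ)
    (hPsymm : Pᵀ = P) (hP : P.PosDef)
    (hQsymm : Qᵀ = Q) (hQ : Q.PosDef)
    (hRiccati : P * (Ac + vecMulVec Bc αd) + (Ac + vecMulVec Bc αd)ᵀ * P
        - P * vecMulVec Bc Bc * P + Q = 0)
    (zd zbar : ℝ → Fin 2 → ℝ)
    (hzd : ∀ t, HasDerivAt zd (Ac.mulVec (zd t) + (αd ⬝ᵥ zd t + γd * yt) • Bc) t)
    (hzbar : ∀ t, HasDerivAt zbar (Ac.mulVec (zbar t) +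
        (αd ⬝ᵥ zbar t + γd * yt
          - (1 / 2) * (Bc ⬝ᵥ P.mulVec (zbar t - zd t))) • Bc) t) :
    Tendsto (fun t => zbar t - zd t) atTop (nhds 0) := by
  subst hAc hBc
  -- symmetry facts
  have hb : P 1 0 = P 0 1 := by
    have := congrFun (congrFun hPsymm 0) 1
    simpa [Matrix.transpose_apply] using this
  have hqb : Q 1 0 = Q 0 1 := by
    have := congrFun (congrFun hQsymm 0) 1
    simpa [Matrix.transpose_apply] using this
  set a := P 0 0 with ha'
  set b := P 0 1 with hb'
  set d := P 1 1 with hd'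
  set qa := Q 0 0 with hqa'
  set qb := Q 0 1 with hqb'
  set qd := Q 1 1 with hqd'
  -- positivity facts
  have ha : (0:ℝ) < a := by
    have := hP.dotProduct_mulVec_pos (x := ![1,0]) (by intro h; have := congrFun h 0; simp at this)
    simpa [dotProduct, mulVec, Fin.sum_univ_two] using this
  have hd : (0:ℝ) < d := by
    have := hP.dotProduct_mulVec_pos (x := ![0,1]) (by intro h; have := congrFun h 1; simp at this)
    simpa [dotProduct, mulVec, Fin.sum_univ_two] using this
  have hdet : (0:ℝ) < a * d - b ^ 2 := by
    have h1 := hP.dotProduct_mulVec_pos (x := ![d, -b]) (by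
      intro h; have := congrFun h 0; simp at this; exact hd.ne' this)
    simp only [dotProduct, mulVec, Fin.sum_univ_two, Matrix.cons_val_zero,
      Matrix.cons_val_one, Matrix.head_cons, hb, star_trivial, Pi.star_apply] at h1
    nlinarith [h1, hd]
  have hqa : (0:ℝ) < qa := by
    have := hQ.dotProduct_mulVec_pos (x := ![1,0]) (by intro h; have := congrFun h 0; simp at this)
    simpa [dotProduct, mulVec, Fin.sum_univ_two] using this
  have hqd : (0:ℝ) < qd := by
    have := hQ.dotProduct_mulVec_pos (x := ![0,1]) (by intro h; have := congrFun h 1; simp at this)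
    simpa [dotProduct, mulVec, Fin.sum_univ_two] using this
  have hqdet : (0:ℝ) < qa * qd - qb ^ 2 := by
    have h1 := hQ.dotProduct_mulVec_pos (x := ![qd, -qb]) (by
      intro h; have := congrFun h 0; simp at this; exact hqd.ne' this)
    simp only [dotProduct, mulVec, Fin.sum_univ_two, Matrix.cons_val_zero,
      Matrix.cons_val_one, Matrix.head_cons, hqb, star_trivial, Pi.star_apply] at h1
    nlinarith [h1, hqd]
  -- scalar Riccati equations
  have R00 := congrFun (congrFun hRiccati 0) 0
  have R01 := congrFun (congrFun hRiccati 0) 1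
  have R10 := congrFun (congrFun hRiccati 1) 0
  have R11 := congrFun (congrFun hRiccati 1) 1
  simp only [Matrix.add_apply, Matrix.sub_apply, Matrix.mul_apply, Matrix.vecMulVec_apply,
    Matrix.transpose_apply, Fin.sum_univ_two, Matrix.cons_val_zero, Matrix.cons_val_one,
    Matrix.head_cons, Matrix.cons_val', Matrix.empty_val', Matrix.cons_val_fin_one,
    Matrix.head_fin_const, Matrix.of_apply, Matrix.zero_apply, hb] at R00 R01 R10 R11
  -- error components and their derivatives
  set e0 : ℝ → ℝ := fun t => zbar t 0 - zd t 0 with he0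
  set e1 : ℝ → ℝ := fun t => zbar t 1 - zd t 1 with he1
  have hde0 : ∀ t, HasDerivAt e0 (e1 t) t := by
    intro t
    have h := hasDerivAt_pi.1 ((hzbar t).sub (hzd t)) 0
    simpa [mulVec, dotProduct, Fin.sum_univ_two] using h
  have hde1 : ∀ t, HasDerivAt e1
      (αd 0 * e0 t + αd 1 * e1 t - (1/2) * (b * e0 t + d * e1 t)) t := by
    intro t
    have h := (hasDerivAt_pi.1 (hzbar t) 1).sub (hasDerivAt_pi.1 (hzd t) 1)
    refine HasDerivAt.congr_deriv h (Eq.symm ?_)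
    simp [mulVec, dotProduct, Fin.sum_univ_two, hb, he0, he1]
    ring
  -- Lyapunov function and its derivative
  set V : ℝ → ℝ := fun t => a * e0 t ^ 2 + 2 * b * (e0 t * e1 t) + d * e1 t ^ 2 with hV'
  have hdV : ∀ t, HasDerivAt V
      (-(qa * e0 t ^ 2 + 2 * qb * (e0 t * e1 t) + qd * e1 t ^ 2)) t := by
    intro t
    have h0 := hde0 t
    have h1 := hde1 t
    have h := (((h0.pow 2).const_mul a).add ((h0.mul h1).const_mul (2*b))).add
      ((h1.pow 2).const_mul d)
    refine HasDerivAt.congr_deriv h (Eq.symm ?_)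
    norm_num
    linear_combination (-(e0 t ^ 2)) * R00 + (-(e0 t * e1 t)) * R01 + (-(e0 t * e1 t)) * R10 +
      (-(e1 t ^ 2)) * R11 + (e0 t * e1 t) * hqb
  -- Lyapunov constants
  set mP := (a*d - b^2)/(a+d) with hmP'
  set MP := a + d with hMP'
  set mQ := (qa*qd - qb^2)/(qa+qd) with hmQ'
  have hmP : 0 < mP := div_pos hdet (by linarith)
  have hMP : 0 < MP := by simp only [hMP']; linarith
  have hmQ : 0 < mQ := div_pos hqdet (by linarith)
  have hlbP : ∀ t, mP * (e0 t^2 + e1 t^2) ≤ V t := fun t =>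
    quad_lb a b d (e0 t) (e1 t) ha hd hdet
  have hubP : ∀ t, V t ≤ MP * (e0 t^2 + e1 t^2) := fun t =>
    quad_ub a b d (e0 t) (e1 t) hd hdet
  have hlbQ : ∀ t, mQ * (e0 t^2 + e1 t^2)
      ≤ qa * e0 t ^ 2 + 2 * qb * (e0 t * e1 t) + qd * e1 t ^ 2 := fun t =>
    quad_lb qa qb qd (e0 t) (e1 t) hqa hqd hqdet
  set c := mQ / MP with hc'
  have hc : 0 < c := div_pos hmQ hMP
  have hcMP : c * MP = mQ := div_mul_cancel₀ mQ (ne_of_gt hMP)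
  -- Gronwall
  have hVcont : Continuous V :=
    continuous_iff_continuousAt.2 fun t => (hdV t).continuousAt
  have hVexp : ∀ T, 0 ≤ T → V T ≤ V 0 * Real.exp (-c * T) := by
    intro T hT
    have key := le_gronwallBound_of_liminf_deriv_right_le (f := V)
      (f' := fun t => -(qa * e0 t ^ 2 + 2 * qb * (e0 t * e1 t) + qd * e1 t ^ 2))
      (δ := V 0) (K := -c) (ε := 0) (a := 0) (b := T)
      hVcont.continuousOn
      (fun x _ r hr => (hdV x).hasDerivWithinAt.liminf_right_slope_le hr)
      le_rfl
      (fun x _ => by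
        have h1 := hlbQ x
        have h2 := hubP x
        have h3 := mul_le_mul_of_nonneg_left h2 hc.le
        have h4 : c * (MP * (e0 x^2 + e1 x^2)) = mQ * (e0 x^2 + e1 x^2) := by
          rw [← mul_assoc, hcMP]
        linarith [h1, h3, h4])
    have h2 := key T ⟨hT, le_rfl⟩
    rwa [sub_zero, gronwallBound_ε0] at h2
  have hVnonneg : ∀ t, 0 ≤ V t := fun t => le_trans (by positivity) (hlbP t)
  have hexp0 : Tendsto (fun t : ℝ => V 0 * Real.exp (-c * t)) atTop (nhds 0) := by
    have h1 : Tendsto (fun t : ℝ => Real.exp (-(c * t))) atTop (nhds 0) :=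
      Real.tendsto_exp_neg_atTop_nhds_zero.comp (Tendsto.const_mul_atTop hc tendsto_id)
    have := h1.const_mul (V 0)
    simpa [neg_mul] using this
  have hVto0 : Tendsto V atTop (nhds 0) :=
    squeeze_zero' (Eventually.of_forall hVnonneg)
      (eventually_atTop.2 ⟨0, fun t ht => hVexp t ht⟩) hexp0
  have hdiv : Tendsto (fun t => V t / mP) atTop (nhds 0) := by
    simpa using hVto0.div_const mP
  have hsum : Tendsto (fun t => e0 t^2 + e1 t^2) atTop (nhds 0) := by
    refine squeeze_zero' (Eventually.of_forall fun t => by positivity)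
      (Eventually.of_forall fun t => ?_) hdiv
    rw [le_div_iff₀ hmP]
    linarith [hlbP t]
  have hsq : Tendsto (fun t => Real.sqrt (e0 t^2 + e1 t^2)) atTop (nhds 0) := by
    have := (Real.continuous_sqrt.tendsto 0).comp hsum
    simpa using (by exact this : Tendsto (fun t => Real.sqrt (e0 t^2 + e1 t^2)) atTop (nhds (Real.sqrt 0)))
  have h0 : Tendsto e0 atTop (nhds 0) :=
    (tendsto_zero_iff_abs_tendsto_zero e0).2 <|
      squeeze_zero (fun t => abs_nonneg _)
        (fun t => Real.abs_le_sqrt (by nlinarith [sq_nonneg (e1 t)])) hsq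
  have h1 : Tendsto e1 atTop (nhds 0) :=
    (tendsto_zero_iff_abs_tendsto_zero e1).2 <|
      squeeze_zero (fun t => abs_nonneg _)
        (fun t => Real.abs_le_sqrt (by nlinarith [sq_nonneg (e0 t)])) hsq
  rw [tendsto_pi_nhds]
  intro i
  fin_cases i
  · exact h0
  · exact h1
end

section
/- Let L ∈ ℝ^{N×N} be the Laplacian of a connected undirected graph on N vertices, i.e., L is symmetric positive semidefinite, L𝟙 = 0, and the kernel of L is exactly span{𝟙}. Let η > 0 and let Ψ₁, Ψ₂ : ℝ → ℝ^N be differentiable functions satisfying Ψ₁' = Ψ₂ and Ψ₂' = −L Ψ₁ − η L Ψ₂. Then Π Ψ₁(t) → 0 and Π Ψ₂(t) → 0 as t → ∞; that is, the trajectory asymptotically converges to the consensus set T = {(Ψ₁,Ψ₂) : Ψ₁ ∈ span{𝟙}, Ψ₂ ∈ span{𝟙}}. -/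
open Matrix Filter

lemma hasDerivAt_dot {N : ℕ} {f g : ℝ → Fin N → ℝ} {f' g' : Fin N → ℝ} {t : ℝ}
    (hf : HasDerivAt f f' t) (hg : HasDerivAt g g' t) :
    HasDerivAt (fun s => f s ⬝ᵥ g s) (f' ⬝ᵥ g t + f t ⬝ᵥ g') t := by
  simp only [dotProduct, ← Finset.sum_add_distrib]
  exact HasDerivAt.fun_sum fun j _ => ((hasDerivAt_pi.1 hf j).mul (hasDerivAt_pi.1 hg j))

lemma hasDerivAt_mulVecComp {N : ℕ} (M : Matrix (Fin N) (Fin N) ℝ) {f : ℝ → Fin N → ℝ}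
    {f' : Fin N → ℝ} {t : ℝ} (hf : HasDerivAt f f' t) :
    HasDerivAt (fun s => M.mulVec (f s)) (M.mulVec f') t := by
  rw [hasDerivAt_pi]
  intro i
  simpa [mulVec, dotProduct] using
    HasDerivAt.fun_sum fun j _ => ((hasDerivAt_pi.1 hf j).const_mul (M i j))

lemma abs_cross (A B P : ℝ) (hA : 0 ≤ A) (hB : 0 ≤ B) (h : P ^ 2 ≤ A * B) :
    -(2 * P) ≤ A + B ∧ 2 * P ≤ A + B := by
  constructor <;> nlinarith [sq_nonneg (A - B), sq_nonneg (A + B)]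

lemma dot_cs {N : ℕ} (v w : Fin N → ℝ) : (v ⬝ᵥ w) ^ 2 ≤ (v ⬝ᵥ v) * (w ⬝ᵥ w) := by
  have h : ∀ x : ℝ, 0 ≤ (w ⬝ᵥ w) * (x * x) + (2 * (v ⬝ᵥ w)) * x + v ⬝ᵥ v := by
    intro x
    have h0 : (0:ℝ) ≤ (v + x • w) ⬝ᵥ (v + x • w) := by
      exact Finset.sum_nonneg fun i _ => mul_self_nonneg _
    calc (0:ℝ) ≤ (v + x • w) ⬝ᵥ (v + x • w) := h0
      _ = (w ⬝ᵥ w) * (x * x) + (2 * (v ⬝ᵥ w)) * x + v ⬝ᵥ v := by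
        simp [add_dotProduct, dotProduct_add, smul_dotProduct, dotProduct_smul, smul_eq_mul,
          dotProduct_comm w v]
        ring
  have := discrim_le_zero h
  simp only [discrim] at this
  nlinarith

lemma form_cs {N : ℕ} (L : Matrix (Fin N) (Fin N) ℝ) (hpsd : L.PosSemidef)
    (hsym : ∀ v w : Fin N → ℝ, v ⬝ᵥ L.mulVec w = w ⬝ᵥ L.mulVec v) (v w : Fin N → ℝ) :
    (v ⬝ᵥ L.mulVec w) ^ 2 ≤ (v ⬝ᵥ L.mulVec v) * (w ⬝ᵥ L.mulVec w) := by
  have h : ∀ x : ℝ, 0 ≤ (w ⬝ᵥ L.mulVec w) * (x * x) + (2 * (v ⬝ᵥ L.mulVec w)) * x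
      + v ⬝ᵥ L.mulVec v := by
    intro x
    have h0 : (0:ℝ) ≤ (v + x • w) ⬝ᵥ L.mulVec (v + x • w) := by simpa using hpsd.dotProduct_mulVec_nonneg (v + x • w)
    calc (0:ℝ) ≤ (v + x • w) ⬝ᵥ L.mulVec (v + x • w) := h0
      _ = (w ⬝ᵥ L.mulVec w) * (x * x) + (2 * (v ⬝ᵥ L.mulVec w)) * x + v ⬝ᵥ L.mulVec v := by
        rw [mulVec_add, mulVec_smul]
        simp [add_dotProduct, dotProduct_add, smul_dotProduct, dotProduct_smul, smul_eq_mul,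
          hsym w v]
        ring
  have := discrim_le_zero h
  simp only [discrim] at this
  nlinarith

lemma spectral_gap {N : ℕ} (L : Matrix (Fin N) (Fin N) ℝ) (hLpsd : L.PosSemidef)
    (hker : ∀ x : Fin N → ℝ, L.mulVec x = 0 → ∃ c : ℝ, x = c • (1 : Fin N → ℝ))
    (hN : 0 < N) :
    ∃ μ > 0, ∀ v : Fin N → ℝ, (1 : Fin N → ℝ) ⬝ᵥ v = 0 → μ * (v ⬝ᵥ v) ≤ v ⬝ᵥ L.mulVec v := by
  set f : (Fin N → ℝ) → ℝ := fun v => v ⬝ᵥ L.mulVec v with hf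
  have hfnn : ∀ v, 0 ≤ f v := by
    intro v
    simpa using hLpsd.dotProduct_mulVec_nonneg v
  have hfc : Continuous f := by
    simp only [hf, dotProduct, mulVec]
    exact continuous_finset_sum _ fun i _ => (continuous_apply i).mul
      (continuous_finset_sum _ fun j _ => continuous_const.mul (continuous_apply j))
  have hdc : Continuous fun v : Fin N → ℝ => (1 : Fin N → ℝ) ⬝ᵥ v := by
    simp only [dotProduct]
    exact continuous_finset_sum _ fun j _ => continuous_const.mul (continuous_apply j)
  have hqc : Continuous fun v : Fin N → ℝ => v ⬝ᵥ v := by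
    simp only [dotProduct]
    exact continuous_finset_sum _ fun j _ => (continuous_apply j).mul (continuous_apply j)
  set K : Set (Fin N → ℝ) := {v | (1 : Fin N → ℝ) ⬝ᵥ v = 0 ∧ v ⬝ᵥ v = 1} with hKdef
  have hKc : IsCompact K := by
    have hcl : IsClosed K := by
      have : K = (fun v : Fin N → ℝ => (1 : Fin N → ℝ) ⬝ᵥ v) ⁻¹' {0} ∩
          (fun v : Fin N → ℝ => v ⬝ᵥ v) ⁻¹' {1} := by
        ext v; simp [hKdef]
      rw [this]
      exact (isClosed_singleton.preimage hdc).inter (isClosed_singleton.preimage hqc)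
    have hbd : Bornology.IsBounded K := by
      apply (Metric.isBounded_closedBall (x := (0 : Fin N → ℝ)) (r := 1)).subset
      intro v hv
      simp only [Metric.mem_closedBall, dist_zero_right]
      rw [pi_norm_le_iff_of_nonneg zero_le_one]
      intro i
      have h1 : v i ^ 2 ≤ 1 := by
        have := Finset.single_le_sum (f := fun j => v j * v j)
          (fun j _ => mul_self_nonneg (v j)) (Finset.mem_univ i)
        rw [show (∑ j, v j * v j) = v ⬝ᵥ v from rfl, hv.2] at this
        have h2 : v i * v i ≤ 1 := this
        nlinarith
      simpa [Real.sqrt_one] using Real.abs_le_sqrt h1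
    exact Metric.isCompact_of_isClosed_isBounded hcl hbd
  have key : ∃ μ > 0, ∀ v ∈ K, μ ≤ f v := by
    by_cases hne : K.Nonempty
    · obtain ⟨m, hmK, hmin⟩ := hKc.exists_isMinOn hne hfc.continuousOn
      refine ⟨f m, ?_, fun v hv => hmin hv⟩
      rcases lt_or_eq_of_le (hfnn m) with h | h
      · exact h
      · exfalso
        have hLm : L.mulVec m = 0 := by
          have := (hLpsd.dotProduct_mulVec_zero_iff m).1 (by simpa using h.symm)
          exact this
        obtain ⟨c, hc⟩ := hker m hLm
        have h1m : (1 : Fin N → ℝ) ⬝ᵥ m = 0 := hmK.1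
        have hmm : m ⬝ᵥ m = 1 := hmK.2
        rw [hc] at h1m hmm
        simp [dotProduct, Finset.mul_sum] at h1m hmm
        rcases h1m with h1m | h1m
        · exact hN.ne' h1m
        · rw [h1m] at hmm; simp at hmm
    · exact ⟨1, one_pos, fun v hv => absurd ⟨v, hv⟩ hne⟩
  obtain ⟨μ, hμpos, hμ⟩ := key
  refine ⟨μ, hμpos, fun v hv => ?_⟩
  have hvv : (0:ℝ) ≤ v ⬝ᵥ v := Finset.sum_nonneg fun i _ => mul_self_nonneg _
  rcases eq_or_lt_of_le hvv with h0 | h0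
  · rw [← h0, mul_zero]; exact hfnn v
  · set s : ℝ := Real.sqrt (v ⬝ᵥ v) with hs
    have hspos : 0 < s := Real.sqrt_pos.2 h0
    have hs2 : s * s = v ⬝ᵥ v := Real.mul_self_sqrt h0.le
    have hwK : s⁻¹ • v ∈ K := by
      constructor
      · simp [dotProduct_smul, hv]
      · simp [smul_dotProduct, dotProduct_smul, smul_eq_mul]
        field_simp
        linarith [hs2]
    have := hμ _ hwK
    have hfw : f (s⁻¹ • v) = s⁻¹ * s⁻¹ * f v := by
      simp [hf, smul_dotProduct, dotProduct_smul, mulVec_smul, smul_eq_mul]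
      ring
    rw [hfw] at this
    have : μ * (s * s) ≤ f v := by
      have hs0 : s ≠ 0 := hspos.ne'
      calc μ * (s * s) ≤ (s⁻¹ * s⁻¹ * f v) * (s * s) := by
            apply mul_le_mul_of_nonneg_right this (by positivity)
        _ = f v := by field_simp
    rw [hs2] at this
    exact this

/-- For the Laplacian `L` of a connected undirected graph (symmetric positive
semidefinite, `L𝟙 = 0`, kernel exactly `span{𝟙}`), `η > 0`, and trajectories with
`Ψ₁' = Ψ₂`, `Ψ₂' = −LΨ₁ − ηLΨ₂`, we have `ΠΨ₁(t) → 0` and `ΠΨ₂(t) → 0` as `t → ∞`,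
where `Π = I − (1/N)𝟙𝟙ᵀ`. -/
theorem consensus_dynamics_tendsto_agreement
    (N : ℕ) (hN : 0 < N)
    (L : Matrix (Fin N) (Fin N) ℝ)
    (hLsymm : Lᵀ = L) (hLpsd : L.PosSemidef)
    (hL1 : L.mulVec 1 = 0)
    (hker : ∀ x : Fin N → ℝ, L.mulVec x = 0 → ∃ c : ℝ, x = c • (1 : Fin N → ℝ))
    (η : ℝ) (hη : 0 < η)
    (Ψ₁ Ψ₂ : ℝ → Fin N → ℝ)
    (h1 : ∀ t, HasDerivAt Ψ₁ (Ψ₂ t) t)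
    (h2 : ∀ t, HasDerivAt Ψ₂ (-(L.mulVec (Ψ₁ t)) - η • L.mulVec (Ψ₂ t)) t) :
    Tendsto (fun t =>
        ((1 : Matrix (Fin N) (Fin N) ℝ) - (N : ℝ)⁻¹ • vecMulVec 1 1).mulVec (Ψ₁ t))
      atTop (nhds 0) ∧
    Tendsto (fun t =>
        ((1 : Matrix (Fin N) (Fin N) ℝ) - (N : ℝ)⁻¹ • vecMulVec 1 1).mulVec (Ψ₂ t))
      atTop (nhds 0) := by
  have hNR : (0:ℝ) < (N:ℝ) := by exact_mod_cast hN
  set P : Matrix (Fin N) (Fin N) ℝ := 1 - (N : ℝ)⁻¹ • vecMulVec 1 1 with hPdef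
  have hPv : ∀ v : Fin N → ℝ,
      P.mulVec v = v - ((N:ℝ)⁻¹ * ((1 : Fin N → ℝ) ⬝ᵥ v)) • 1 := by
    intro v
    rw [hPdef, sub_mulVec, one_mulVec, smul_mulVec]
    congr 1
    funext i
    simp [vecMulVec_apply, mulVec, dotProduct, smul_eq_mul, Finset.mul_sum]
  have hsym : ∀ v w : Fin N → ℝ, v ⬝ᵥ L.mulVec w = w ⬝ᵥ L.mulVec v := by
    intro v w
    have hvm : v ᵥ* L = L *ᵥ v := by
      rw [← mulVec_transpose, hLsymm]
    rw [dotProduct_mulVec, hvm, dotProduct_comm]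
  have honeL : ∀ v : Fin N → ℝ, (1 : Fin N → ℝ) ⬝ᵥ L.mulVec v = 0 := by
    intro v
    rw [hsym, hL1, dotProduct_zero]
  have hone : (1 : Fin N → ℝ) ⬝ᵥ (1 : Fin N → ℝ) = (N : ℝ) := by
    simp [dotProduct]
  have hPL : ∀ v, P.mulVec (L.mulVec v) = L.mulVec v := by
    intro v
    rw [hPv, honeL]
    simp
  have hLP : ∀ v, L.mulVec (P.mulVec v) = L.mulVec v := by
    intro v
    rw [hPv, mulVec_sub, mulVec_smul, hL1]
    simp
  have honeP : ∀ v, (1 : Fin N → ℝ) ⬝ᵥ P.mulVec v = 0 := by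
    intro v
    rw [hPv, dotProduct_sub, dotProduct_smul, hone, smul_eq_mul]
    field_simp
    simp
  obtain ⟨X, hXdef⟩ : ∃ X : ℝ → Fin N → ℝ, X = fun t => P.mulVec (Ψ₁ t) := ⟨_, rfl⟩
  obtain ⟨Y, hYdef⟩ : ∃ Y : ℝ → Fin N → ℝ, Y = fun t => P.mulVec (Ψ₂ t) := ⟨_, rfl⟩
  have hX : ∀ t, HasDerivAt X (Y t) t := by
    intro t
    simp only [hXdef, hYdef]
    exact hasDerivAt_mulVecComp P (h1 t)
  have hY : ∀ t, HasDerivAt Y (-(L.mulVec (X t)) - η • L.mulVec (Y t)) t := by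
    intro t
    have h := hasDerivAt_mulVecComp P (h2 t)
    simp only [hXdef, hYdef]
    have e : P.mulVec (-(L.mulVec (Ψ₁ t)) - η • L.mulVec (Ψ₂ t))
        = -(L.mulVec (P.mulVec (Ψ₁ t))) - η • L.mulVec (P.mulVec (Ψ₂ t)) := by
      rw [mulVec_sub, mulVec_neg, mulVec_smul, hPL, hPL, ← hLP (Ψ₁ t), ← hLP (Ψ₂ t)]
    rw [e] at h
    exact h
  obtain ⟨μ, hμpos, hμ⟩ := spectral_gap L hLpsd hker hN
  -- constants
  obtain ⟨ε, hεdef⟩ : ∃ e : ℝ, e = min (min 1 μ) (min (η * μ / 2) (2 / η)) := ⟨_, rfl⟩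
  have hεpos : 0 < ε := by
    rw [hεdef]
    apply lt_min (lt_min one_pos hμpos)
    exact lt_min (by positivity) (by positivity)
  have hε1 : ε ≤ 1 := by rw [hεdef]; exact le_trans (min_le_left _ _) (min_le_left _ _)
  have hεμ : ε ≤ μ := by rw [hεdef]; exact le_trans (min_le_left _ _) (min_le_right _ _)
  have hεημ : ε ≤ η * μ / 2 := by rw [hεdef]; exact le_trans (min_le_right _ _) (min_le_left _ _)
  have hεη : ε * η ≤ 2 := by
    have h : ε ≤ 2 / η := by
      rw [hεdef]
      exact le_trans (min_le_right (min 1 μ) (min (η * μ / 2) (2 / η)))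
        (min_le_right (η * μ / 2) (2 / η))
    calc ε * η ≤ (2 / η) * η := mul_le_mul_of_nonneg_right h hη.le
      _ = 2 := by field_simp
  obtain ⟨k, hkdef⟩ : ∃ x : ℝ, x = min (ε / 2) (η * μ / 2) := ⟨_, rfl⟩
  have hkpos : 0 < k := by rw [hkdef]; exact lt_min (by positivity) (by positivity)
  have hk1 : k ≤ ε / 2 := by rw [hkdef]; exact min_le_left _ _
  have hk2 : k ≤ η * μ / 2 := by rw [hkdef]; exact min_le_right _ _
  -- the Lyapunov function
  obtain ⟨V, hVdef⟩ : ∃ V : ℝ → ℝ,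
      V = fun t => X t ⬝ᵥ L.mulVec (X t) + Y t ⬝ᵥ Y t + ε * (X t ⬝ᵥ Y t) := ⟨_, rfl⟩
  -- pointwise facts
  have hann : ∀ t, 0 ≤ X t ⬝ᵥ L.mulVec (X t) := fun t => by simpa using hLpsd.dotProduct_mulVec_nonneg (X t)
  have hqnn : ∀ t, 0 ≤ Y t ⬝ᵥ L.mulVec (Y t) := fun t => by simpa using hLpsd.dotProduct_mulVec_nonneg (Y t)
  have hbnn : ∀ t, 0 ≤ Y t ⬝ᵥ Y t := fun t => Finset.sum_nonneg fun i _ => mul_self_nonneg _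
  have hxxnn : ∀ t, 0 ≤ X t ⬝ᵥ X t := fun t => Finset.sum_nonneg fun i _ => mul_self_nonneg _
  have honeX : ∀ t, (1 : Fin N → ℝ) ⬝ᵥ X t = 0 := by
    intro t; rw [hXdef]; exact honeP _
  have honeY : ∀ t, (1 : Fin N → ℝ) ⬝ᵥ Y t = 0 := by
    intro t; rw [hYdef]; exact honeP _
  have hμa : ∀ t, μ * (X t ⬝ᵥ X t) ≤ X t ⬝ᵥ L.mulVec (X t) := fun t => hμ _ (honeX t)
  have hμb : ∀ t, μ * (Y t ⬝ᵥ Y t) ≤ Y t ⬝ᵥ L.mulVec (Y t) := fun t => hμ _ (honeY t)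
  have hpq : ∀ t, (X t ⬝ᵥ L.mulVec (Y t)) ^ 2
      ≤ (X t ⬝ᵥ L.mulVec (X t)) * (Y t ⬝ᵥ L.mulVec (Y t)) := fun t => form_cs L hLpsd hsym _ _
  have hccsq : ∀ t, (X t ⬝ᵥ Y t) ^ 2 ≤ (X t ⬝ᵥ X t) * (Y t ⬝ᵥ Y t) := fun t => dot_cs _ _
  -- cross-term bound for V
  have hcross : ∀ t, -(2 * (ε * (X t ⬝ᵥ Y t))) ≤ X t ⬝ᵥ L.mulVec (X t) + Y t ⬝ᵥ Y t ∧
      2 * (ε * (X t ⬝ᵥ Y t)) ≤ X t ⬝ᵥ L.mulVec (X t) + Y t ⬝ᵥ Y t := by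
    intro t
    apply abs_cross _ _ _ (hann t) (hbnn t)
    have h1 : (ε * (X t ⬝ᵥ Y t)) ^ 2 = ε ^ 2 * (X t ⬝ᵥ Y t) ^ 2 := by ring
    have hε2μ : ε ^ 2 ≤ μ := by nlinarith
    nlinarith [hccsq t, hμa t, hxxnn t, hbnn t, sq_nonneg ε,
      mul_le_mul_of_nonneg_right (hμa t) (hbnn t)]
  have hVlb : ∀ t, (X t ⬝ᵥ L.mulVec (X t) + Y t ⬝ᵥ Y t) / 2 ≤ V t := by
    intro t
    have := (hcross t).1
    simp only [hVdef]
    linarith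
  have hVub : ∀ t, V t ≤ (3 / 2) * (X t ⬝ᵥ L.mulVec (X t) + Y t ⬝ᵥ Y t) := by
    intro t
    have := (hcross t).2
    simp only [hVdef]
    linarith
  -- derivative of V
  have hV : ∀ t, HasDerivAt V
      (-(2 * η) * (Y t ⬝ᵥ L.mulVec (Y t)) + ε * (Y t ⬝ᵥ Y t)
        - ε * (X t ⬝ᵥ L.mulVec (X t)) - ε * η * (X t ⬝ᵥ L.mulVec (Y t))) t := by
    intro t
    have hLX : HasDerivAt (fun s => L.mulVec (X s)) (L.mulVec (Y t)) t :=
      hasDerivAt_mulVecComp L (hX t)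
    have ha := hasDerivAt_dot (hX t) hLX
    have hb := hasDerivAt_dot (hY t) (hY t)
    have hc := hasDerivAt_dot (hX t) (hY t)
    have H := (ha.fun_add hb).fun_add (hc.const_mul ε)
    rw [hVdef]
    refine H.congr_deriv ?_
    symm
    simp only [sub_dotProduct, dotProduct_sub, neg_dotProduct, dotProduct_neg,
      smul_dotProduct, dotProduct_smul, smul_eq_mul]
    rw [dotProduct_comm (L.mulVec (X t)) (Y t), dotProduct_comm (L.mulVec (Y t)) (Y t),
      hsym (Y t) (X t)]
    ring
  -- Lyapunov decay inequality
  have hDk : ∀ t, (-(2 * η) * (Y t ⬝ᵥ L.mulVec (Y t)) + ε * (Y t ⬝ᵥ Y t)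
      - ε * (X t ⬝ᵥ L.mulVec (X t)) - ε * η * (X t ⬝ᵥ L.mulVec (Y t)))
      + (k / 2) * V t ≤ 0 := by
    intro t
    set A := X t ⬝ᵥ L.mulVec (X t) with hA
    set B := Y t ⬝ᵥ Y t with hB
    set Q := Y t ⬝ᵥ L.mulVec (Y t) with hQ
    set Pp := X t ⬝ᵥ L.mulVec (Y t) with hPp
    have hAnn := hann t; have hBnn := hbnn t; have hQnn := hqnn t
    have hsqbound : (η * Pp) ^ 2 ≤ A * (η ^ 2 * Q) := by
      calc (η * Pp) ^ 2 = η ^ 2 * Pp ^ 2 := by ring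
        _ ≤ η ^ 2 * (A * Q) := mul_le_mul_of_nonneg_left (hpq t) (sq_nonneg η)
        _ = A * (η ^ 2 * Q) := by ring
    have hcr := abs_cross A (η ^ 2 * Q) (η * Pp) hAnn (by positivity) hsqbound
    have step2 : -(ε * η * Pp) ≤ ε / 2 * A + ε / 2 * (η ^ 2 * Q) := by
      linarith [mul_le_mul_of_nonneg_left hcr.1 (by positivity : (0:ℝ) ≤ ε / 2)]
    have step3 : ε / 2 * (η ^ 2 * Q) ≤ η * Q := by
      linarith [mul_le_mul_of_nonneg_right hεη (mul_nonneg hη.le hQnn)]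
    have step4 : η * (μ * B) ≤ η * Q := mul_le_mul_of_nonneg_left (hμb t) hη.le
    have step5 : ε * B ≤ η * μ / 2 * B := mul_le_mul_of_nonneg_right hεημ hBnn
    have hD : -(2 * η) * Q + ε * B - ε * A - ε * η * Pp ≤ -(k * (A + B)) := by
      have hkA : k * A ≤ ε / 2 * A := mul_le_mul_of_nonneg_right hk1 hAnn
      have hkB : k * B ≤ η * μ / 2 * B := mul_le_mul_of_nonneg_right hk2 hBnn
      linarith [step2, step3, step4, step5, hkA, hkB]
    have hVu := hVub t
    have hVu2 : (k / 2) * V t ≤ (k / 2) * ((3 / 2) * (A + B)) :=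
      mul_le_mul_of_nonneg_left hVu (by positivity)
    linarith [hD, hVu2, mul_nonneg hkpos.le (add_nonneg hAnn hBnn)]
  -- the weighted function W is antitone
  obtain ⟨W, hWdef⟩ : ∃ W : ℝ → ℝ, W = fun t => V t * Real.exp ((k / 2) * t) := ⟨_, rfl⟩
  have hW : ∀ t, HasDerivAt W
      ((-(2 * η) * (Y t ⬝ᵥ L.mulVec (Y t)) + ε * (Y t ⬝ᵥ Y t)
        - ε * (X t ⬝ᵥ L.mulVec (X t)) - ε * η * (X t ⬝ᵥ L.mulVec (Y t))
        + (k / 2) * V t) * Real.exp ((k / 2) * t)) t := by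
    intro t
    have he : HasDerivAt (fun s => Real.exp ((k / 2) * s))
        (Real.exp ((k / 2) * t) * (k / 2)) t := by
      simpa using ((hasDerivAt_id t).const_mul (k / 2)).exp
    have := (hV t).fun_mul he
    rw [hWdef]
    refine this.congr_deriv ?_
    symm
    ring
  have hWanti : Antitone W := by
    apply antitone_of_deriv_nonpos (fun t => (hW t).differentiableAt)
    intro t
    rw [(hW t).deriv]
    exact mul_nonpos_of_nonpos_of_nonneg (hDk t) (Real.exp_pos _).le
  -- decay bound
  have hbound : ∀ t : ℝ, 0 ≤ t → X t ⬝ᵥ L.mulVec (X t) + Y t ⬝ᵥ Y t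
      ≤ 2 * W 0 * Real.exp (-((k / 2) * t)) := by
    intro t ht
    have hE : (0:ℝ) < Real.exp ((k / 2) * t) := Real.exp_pos _
    have hWt : W t ≤ W 0 := hWanti ht
    have h1 : (X t ⬝ᵥ L.mulVec (X t) + Y t ⬝ᵥ Y t) * Real.exp ((k / 2) * t) ≤ 2 * W 0 := by
      have h2 : (X t ⬝ᵥ L.mulVec (X t) + Y t ⬝ᵥ Y t) ≤ 2 * V t := by
        have h3 := hVlb t; linarith
      calc (X t ⬝ᵥ L.mulVec (X t) + Y t ⬝ᵥ Y t) * Real.exp ((k / 2) * t)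
          ≤ (2 * V t) * Real.exp ((k / 2) * t) := mul_le_mul_of_nonneg_right h2 hE.le
        _ = 2 * W t := by rw [hWdef]; ring
        _ ≤ 2 * W 0 := by linarith
    calc X t ⬝ᵥ L.mulVec (X t) + Y t ⬝ᵥ Y t
        = ((X t ⬝ᵥ L.mulVec (X t) + Y t ⬝ᵥ Y t) * Real.exp ((k / 2) * t))
          * Real.exp (-((k / 2) * t)) := by
          rw [mul_assoc, ← Real.exp_add]; simp
      _ ≤ (2 * W 0) * Real.exp (-((k / 2) * t)) :=
          mul_le_mul_of_nonneg_right h1 (Real.exp_pos _).le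
      _ = 2 * W 0 * Real.exp (-((k / 2) * t)) := by ring
  -- the decaying majorant tends to 0
  have hgto : Tendsto (fun t => 2 * W 0 * Real.exp (-((k / 2) * t))) atTop (nhds 0) := by
    have h1 : Tendsto (fun t : ℝ => (k / 2) * t) atTop atTop :=
      Tendsto.const_mul_atTop (by positivity) tendsto_id
    have h2 : Tendsto (fun t : ℝ => Real.exp (-((k / 2) * t))) atTop (nhds 0) :=
      Real.tendsto_exp_neg_atTop_nhds_zero.comp h1
    simpa using h2.const_mul (2 * W 0)
  have hab : Tendsto (fun t => X t ⬝ᵥ L.mulVec (X t) + Y t ⬝ᵥ Y t) atTop (nhds 0) := by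
    apply squeeze_zero' (Eventually.of_forall fun t => add_nonneg (hann t) (hbnn t))
      ?_ hgto
    filter_upwards [eventually_ge_atTop (0:ℝ)] with t ht
    exact hbound t ht
  have ha0 : Tendsto (fun t => X t ⬝ᵥ L.mulVec (X t)) atTop (nhds 0) :=
    squeeze_zero hann (fun t => le_add_of_nonneg_right (hbnn t)) hab
  have hb0 : Tendsto (fun t => Y t ⬝ᵥ Y t) atTop (nhds 0) :=
    squeeze_zero hbnn (fun t => le_add_of_nonneg_left (hann t)) hab
  have hxx0 : Tendsto (fun t => X t ⬝ᵥ X t) atTop (nhds 0) := by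
    have hle : ∀ t, X t ⬝ᵥ X t ≤ μ⁻¹ * (X t ⬝ᵥ L.mulVec (X t)) := by
      intro t
      have h := mul_le_mul_of_nonneg_left (hμa t) (inv_nonneg.2 hμpos.le)
      rw [← mul_assoc, inv_mul_cancel₀ hμpos.ne', one_mul] at h
      exact h
    exact squeeze_zero hxxnn hle (by simpa using ha0.const_mul μ⁻¹)
  -- convert quadratic convergence to convergence of the vectors
  have hnormbound : ∀ (Z : ℝ → Fin N → ℝ) (t : ℝ), ‖Z t‖ ≤ Real.sqrt (Z t ⬝ᵥ Z t) := by
    intro Z t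
    rw [pi_norm_le_iff_of_nonneg (Real.sqrt_nonneg _)]
    intro i
    apply Real.abs_le_sqrt
    rw [sq]
    exact Finset.single_le_sum (f := fun j => Z t j * Z t j)
      (fun j _ => mul_self_nonneg _) (Finset.mem_univ i)
  have hXto : Tendsto X atTop (nhds 0) := by
    apply squeeze_zero_norm (fun t => hnormbound X t)
    have := (Real.continuous_sqrt.tendsto 0).comp hxx0
    simpa [Function.comp_def] using this
  have hYto : Tendsto Y atTop (nhds 0) := by
    apply squeeze_zero_norm (fun t => hnormbound Y t)
    have := (Real.continuous_sqrt.tendsto 0).comp hb0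
    simpa [Function.comp_def] using this
  rw [hXdef] at hXto
  rw [hYdef] at hYto
  exact ⟨hXto, hYto⟩
end

section
/- Let M ∈ ℝ^{n×n} and suppose there exist symmetric positive definite matrices P, Q ∈ ℝ^{n×n} with P M + Mᵀ P = −Q. If e : ℝ → ℝⁿ is differentiable with e'(t) = M e(t) for all t, then e(t) → 0 as t → ∞. -/
open Matrix Filter

lemma quad_smul (n : ℕ) (A : Matrix (Fin n) (Fin n) ℝ) (r : ℝ) (x : Fin n → ℝ) :
    (r • x) ⬝ᵥ A.mulVec (r • x) = r^2 * (x ⬝ᵥ A.mulVec x) := by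
  rw [Matrix.mulVec_smul, smul_dotProduct, dotProduct_smul]
  simp [smul_eq_mul]; ring

lemma quad_cont (n : ℕ) (A : Matrix (Fin n) (Fin n) ℝ) :
    Continuous (fun x : Fin n → ℝ => x ⬝ᵥ A.mulVec x) := by
  simp only [dotProduct, Matrix.mulVec]
  fun_prop

lemma dot_cont (n : ℕ) : Continuous (fun x : Fin n → ℝ => x ⬝ᵥ x) := by
  simp only [dotProduct]; fun_prop

lemma norm_le_sqrt_dot (n : ℕ) (x : Fin n → ℝ) : ‖x‖ ≤ Real.sqrt (x ⬝ᵥ x) := by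
  rw [pi_norm_le_iff_of_nonneg (Real.sqrt_nonneg _)]
  intro i
  rw [Real.norm_eq_abs]
  apply Real.abs_le_sqrt
  rw [pow_two]
  exact Finset.single_le_sum (f := fun j => x j * x j)
    (fun j _ => mul_self_nonneg _) (Finset.mem_univ i)

lemma sphere_compact (n : ℕ) :
    IsCompact {x : Fin n → ℝ | x ⬝ᵥ x = 1} := by
  apply Metric.isCompact_of_isClosed_isBounded
  · exact isClosed_eq (dot_cont n) continuous_const
  · rw [Metric.isBounded_iff_subset_closedBall 0]
    refine ⟨1, fun x hx => ?_⟩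
    simp only [Metric.mem_closedBall, dist_zero_right]
    calc ‖x‖ ≤ Real.sqrt (x ⬝ᵥ x) := norm_le_sqrt_dot n x
    _ = 1 := by rw [hx]; simp

lemma dot_self_nonneg (n : ℕ) (x : Fin n → ℝ) : 0 ≤ x ⬝ᵥ x :=
  Finset.sum_nonneg fun i _ => mul_self_nonneg _

lemma quad_bounds (n : ℕ) (hn : 0 < n) (A : Matrix (Fin n) (Fin n) ℝ) (hA : A.PosDef) :
    ∃ m b : ℝ, 0 < m ∧ 0 < b ∧
      ∀ x : Fin n → ℝ, m * (x ⬝ᵥ x) ≤ x ⬝ᵥ A.mulVec x ∧ x ⬝ᵥ A.mulVec x ≤ b * (x ⬝ᵥ x) := by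
  set S : Set (Fin n → ℝ) := {x | x ⬝ᵥ x = 1} with hS
  have hx0 : (Pi.single (⟨0, hn⟩ : Fin n) (1:ℝ)) ∈ S := by
    simp [hS, dotProduct, Pi.single_apply]
  have hne : S.Nonempty := ⟨_, hx0⟩
  obtain ⟨y, hyS, hy⟩ := (sphere_compact n).exists_isMinOn hne ((quad_cont n A).continuousOn)
  obtain ⟨z, hzS, hz⟩ := (sphere_compact n).exists_isMaxOn hne ((quad_cont n A).continuousOn)
  have hyne : y ≠ 0 := by
    intro h; simp [h] at hyS
  have hm : 0 < y ⬝ᵥ A.mulVec y := hA.dotProduct_mulVec_pos hyne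
  refine ⟨_, _, hm, lt_of_lt_of_le hm (hy hzS : _), fun x => ?_⟩
  by_cases hx : x = 0
  · simp [hx]
  · have hdot : 0 < x ⬝ᵥ x :=
      lt_of_le_of_ne (dot_self_nonneg n x) (fun h => hx (dotProduct_self_eq_zero.mp h.symm))
    set r : ℝ := Real.sqrt (x ⬝ᵥ x) with hr
    have hrpos : 0 < r := Real.sqrt_pos.mpr hdot
    have hr2 : r ^ 2 = x ⬝ᵥ x := Real.sq_sqrt hdot.le
    set w : Fin n → ℝ := r⁻¹ • x with hw
    have hxw : x = r • w := by
      rw [hw, smul_smul, mul_inv_cancel₀ hrpos.ne', one_smul]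
    have hwS : w ∈ S := by
      have : w ⬝ᵥ w = r⁻¹ ^ 2 * (x ⬝ᵥ x) := by
        rw [hw, smul_dotProduct, dotProduct_smul, smul_eq_mul, smul_eq_mul, pow_two]; ring
      rw [hS]
      simp only [Set.mem_setOf_eq, this, inv_pow, hr2, inv_mul_cancel₀ hdot.ne']
    have hq : x ⬝ᵥ A.mulVec x = r ^ 2 * (w ⬝ᵥ A.mulVec w) := by
      rw [hxw, quad_smul]
    constructor
    · rw [hq, ← hr2]
      have h1 : y ⬝ᵥ A.mulVec y ≤ w ⬝ᵥ A.mulVec w := hy hwS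
      nlinarith [sq_nonneg r]
    · rw [hq, ← hr2]
      have h1 : w ⬝ᵥ A.mulVec w ≤ z ⬝ᵥ A.mulVec z := hz hwS
      nlinarith [sq_nonneg r]

lemma hasDerivAt_quadV (n : ℕ) (P : Matrix (Fin n) (Fin n) ℝ) (e : ℝ → Fin n → ℝ)
    (e' : Fin n → ℝ) (t : ℝ) (he : HasDerivAt e e' t) :
    HasDerivAt (fun s => e s ⬝ᵥ P.mulVec (e s))
      (e' ⬝ᵥ P.mulVec (e t) + e t ⬝ᵥ P.mulVec e') t := by
  have hei : ∀ i, HasDerivAt (fun s => e s i) (e' i) t := fun i => hasDerivAt_pi.mp he i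
  have hin : ∀ i, HasDerivAt (fun s => ∑ j, P i j * e s j) (∑ j, P i j * e' j) t :=
    fun i => HasDerivAt.fun_sum (fun j _ => (hei j).const_mul (P i j))
  have h : HasDerivAt (fun s => ∑ i, e s i * ∑ j, P i j * e s j)
      (∑ i, (e' i * (∑ j, P i j * e t j) + e t i * (∑ j, P i j * e' j))) t :=
    HasDerivAt.fun_sum (fun i _ => (hei i).mul (hin i))
  convert h using 1
  all_goals try simp [dotProduct, Matrix.mulVec, Finset.sum_add_distrib]
  all_goals ext s; simp [dotProduct, Matrix.mulVec]

lemma quad_lyap (n : ℕ) (M P Q : Matrix (Fin n) (Fin n) ℝ)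
    (hLyap : P * M + Mᵀ * P = -Q) (x : Fin n → ℝ) :
    (M.mulVec x) ⬝ᵥ P.mulVec x + x ⬝ᵥ P.mulVec (M.mulVec x) = -(x ⬝ᵥ Q.mulVec x) := by
  have h1 : (M.mulVec x) ⬝ᵥ P.mulVec x = x ⬝ᵥ (Mᵀ * P).mulVec x := by
    rw [← Matrix.mulVec_mulVec, Matrix.dotProduct_mulVec x Mᵀ, Matrix.vecMul_transpose]
  have h2 : x ⬝ᵥ P.mulVec (M.mulVec x) = x ⬝ᵥ (P * M).mulVec x := by
    rw [Matrix.mulVec_mulVec]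
  rw [h1, h2, ← dotProduct_add, ← Matrix.add_mulVec, add_comm (Mᵀ * P), hLyap,
    Matrix.neg_mulVec, dotProduct_neg]

/-- If there exist symmetric positive definite `P`, `Q` with
`PM + MᵀP = −Q`, then every solution of `e' = Me` satisfies `e(t) → 0` as `t → ∞`. -/
theorem lyapunov_stability_tendsto_zero
    (n : ℕ) (M P Q : Matrix (Fin n) (Fin n) ℝ)
    (hP : P.PosDef) (hQ : Q.PosDef)
    (hLyap : P * M + Mᵀ * P = -Q)
    (e : ℝ → Fin n → ℝ)
    (he : ∀ t, HasDerivAt e (M.mulVec (e t)) t) :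
    Tendsto e atTop (nhds 0) := by
  rcases Nat.eq_zero_or_pos n with hn | hn
  · subst hn
    have : e = fun _ => 0 := funext fun t => Subsingleton.elim _ _
    rw [this]
    exact tendsto_const_nhds
  obtain ⟨m, b, hm, hb, hPb⟩ := quad_bounds n hn P hP
  obtain ⟨q, bq, hq, hbq, hQb⟩ := quad_bounds n hn Q hQ
  set c : ℝ := q / b with hcdef
  have hc : 0 < c := div_pos hq hb
  have hcb : c * b = q := div_mul_cancel₀ q hb.ne'
  have key : ∀ x : Fin n → ℝ, c * (x ⬝ᵥ P.mulVec x) ≤ x ⬝ᵥ Q.mulVec x := by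
    intro x
    have h1 := (hPb x).2
    have h2 := (hQb x).1
    nlinarith [dot_self_nonneg n x, hc.le]
  set V : ℝ → ℝ := fun t => e t ⬝ᵥ P.mulVec (e t) with hVdef
  have hV : ∀ t, HasDerivAt V (-(e t ⬝ᵥ Q.mulVec (e t))) t := by
    intro t
    rw [← quad_lyap n M P Q hLyap (e t)]
    exact hasDerivAt_quadV n P e (M.mulVec (e t)) t (he t)
  set g : ℝ → ℝ := fun t => V t * Real.exp (c * t) with hgdef
  have hg : ∀ t, HasDerivAt g ((-(e t ⬝ᵥ Q.mulVec (e t)) + c * V t) * Real.exp (c * t)) t := by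
    intro t
    have hexp : HasDerivAt (fun s => Real.exp (c * s)) (Real.exp (c * t) * c) t := by
      simpa using ((hasDerivAt_id t).const_mul c).exp
    have := (hV t).fun_mul hexp
    refine this.congr_deriv ?_
    ring
  have hganti : Antitone g := by
    apply antitone_of_deriv_nonpos
    · exact fun t => (hg t).differentiableAt
    · intro t
      rw [(hg t).deriv]
      apply mul_nonpos_of_nonpos_of_nonneg _ (Real.exp_nonneg _)
      have := key (e t)
      linarith
  have hVle : ∀ t ≥ (0:ℝ), V t ≤ V 0 * Real.exp (-(c * t)) := by
    intro t ht
    have h1 : V t * Real.exp (c * t) ≤ V 0 * Real.exp (c * 0) := hganti ht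
    have hexp : (0:ℝ) < Real.exp (c * t) := Real.exp_pos _
    rw [Real.exp_neg, ← div_eq_mul_inv, le_div_iff₀ hexp]
    simpa using h1
  have hV0 : ∀ t, 0 ≤ V t := fun t =>
    le_trans (mul_nonneg hm.le (dot_self_nonneg n (e t))) (hPb (e t)).1
  have hup : Tendsto (fun t => V 0 * Real.exp (-(c * t))) atTop (nhds 0) := by
    have h1 : Tendsto (fun t : ℝ => c * t) atTop atTop := tendsto_id.const_mul_atTop hc
    have h2 := Real.tendsto_exp_neg_atTop_nhds_zero.comp h1
    have h3 := h2.const_mul (V 0)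
    simpa [Function.comp] using h3
  have hVtend : Tendsto V atTop (nhds 0) := by
    apply tendsto_of_tendsto_of_tendsto_of_le_of_le' tendsto_const_nhds hup
    · exact Eventually.of_forall hV0
    · filter_upwards [eventually_ge_atTop (0:ℝ)] with t ht using hVle t ht
  rw [tendsto_zero_iff_norm_tendsto_zero]
  have hsq : Tendsto (fun t => Real.sqrt (V t / m)) atTop (nhds 0) := by
    have h1 : Tendsto (fun t => V t / m) atTop (nhds 0) := by
      simpa using hVtend.div_const m
    have h2 := (Real.continuous_sqrt.tendsto 0).comp h1
    simpa [Function.comp_def] using h2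
  apply tendsto_of_tendsto_of_tendsto_of_le_of_le tendsto_const_nhds hsq
    (fun t => norm_nonneg _)
  intro t
  calc ‖e t‖ ≤ Real.sqrt (e t ⬝ᵥ e t) := norm_le_sqrt_dot n (e t)
  _ ≤ Real.sqrt (V t / m) := by
      apply Real.sqrt_le_sqrt
      rw [le_div_iff₀ hm]
      linarith [(hPb (e t)).1]
end

section
/- Let M ∈ ℝ^{n×n} and suppose there exist symmetric positive definite matrices P, Q ∈ ℝ^{n×n} with P M + Mᵀ P = −Q. Then every complex eigenvalue of M has strictly negative real part (i.e., M is Hurwitz). -/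
open Matrix

/-- Real part of the complex quadratic form of a real matrix. -/
lemma re_quadform {n : ℕ} (A : Matrix (Fin n) (Fin n) ℝ) (x : Fin n → ℂ) :
    (star x ⬝ᵥ (A.map Complex.ofReal) *ᵥ x).re =
      (fun i => (x i).re) ⬝ᵥ A *ᵥ (fun i => (x i).re) +
      (fun i => (x i).im) ⬝ᵥ A *ᵥ (fun i => (x i).im) := by
  simp only [dotProduct, mulVec, Pi.star_apply, map_apply, Finset.mul_sum,
    Complex.re_sum, Complex.mul_re, Complex.ofReal_re, Complex.ofReal_im,
    RCLike.star_def, Complex.conj_re, Complex.conj_im, Complex.mul_im]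
  rw [← Finset.sum_add_distrib]
  refine Finset.sum_congr rfl fun i _ => ?_
  rw [← Finset.sum_add_distrib]
  refine Finset.sum_congr rfl fun j _ => ?_
  ring

lemma pos_quadform {n : ℕ} {A : Matrix (Fin n) (Fin n) ℝ} (hA : A.PosDef)
    {x : Fin n → ℂ} (hx : x ≠ 0) :
    0 < (star x ⬝ᵥ (A.map Complex.ofReal) *ᵥ x).re := by
  rw [re_quadform]
  set a : Fin n → ℝ := fun i => (x i).re
  set b : Fin n → ℝ := fun i => (x i).im
  have hab : a ≠ 0 ∨ b ≠ 0 := by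
    by_contra h
    push_neg at h
    apply hx
    funext i
    have ha := congrFun h.1 i
    have hb := congrFun h.2 i
    exact Complex.ext ha hb
  rcases hab with h | h
  · have h1 : 0 < a ⬝ᵥ A *ᵥ a := by simpa using hA.dotProduct_mulVec_pos h
    have h2 : 0 ≤ b ⬝ᵥ A *ᵥ b := by simpa using hA.posSemidef.dotProduct_mulVec_nonneg b
    linarith
  · have h1 : 0 ≤ a ⬝ᵥ A *ᵥ a := by simpa using hA.posSemidef.dotProduct_mulVec_nonneg a
    have h2 : 0 < b ⬝ᵥ A *ᵥ b := by simpa using hA.dotProduct_mulVec_pos h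
    linarith

lemma mulVec_star_real {n : ℕ} (A : Matrix (Fin n) (Fin n) ℝ) (v : Fin n → ℂ) :
    (A.map Complex.ofReal) *ᵥ (star v) = star ((A.map Complex.ofReal) *ᵥ v) := by
  funext i
  simp only [mulVec, dotProduct, Pi.star_apply, map_apply, star_sum, star_mul',
    RCLike.star_def, Complex.conj_ofReal]

/-- If there exist symmetric positive definite `P`, `Q` with
`PM + MᵀP = −Q`, then every complex eigenvalue of `M` has strictly negative real
part, i.e. `M` is Hurwitz. -/
theorem lyapunov_implies_hurwitz
    (n : ℕ) (M P Q : Matrix (Fin n) (Fin n) ℝ)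
    (hP : P.PosDef) (hQ : Q.PosDef)
    (hLyap : P * M + Mᵀ * P = -Q) :
    ∀ (μ : ℂ) (v : Fin n → ℂ), v ≠ 0 →
      (M.map Complex.ofReal).mulVec v = μ • v → μ.re < 0 := by
  intro μ v hv hMv
  set f : ℝ →+* ℂ := Complex.ofRealHom
  set M' := M.map Complex.ofReal
  set P' := P.map Complex.ofReal
  set Q' := Q.map Complex.ofReal
  have hmap : P' * M' + M'ᵀ * P' = -Q' := by
    ext i j
    have h := congrFun (congrFun hLyap i) j
    simp only [Matrix.add_apply, Matrix.mul_apply, Matrix.neg_apply,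
      Matrix.transpose_apply] at h
    simp only [M', P', Q', Matrix.add_apply, Matrix.mul_apply, Matrix.neg_apply,
      Matrix.transpose_apply, Matrix.map_apply]
    rw [← Complex.ofReal_neg, ← h]
    push_cast
    ring
  set c : ℂ := star v ⬝ᵥ P' *ᵥ v
  set q : ℂ := star v ⬝ᵥ Q' *ᵥ v
  have h1 : star v ⬝ᵥ (P' * M') *ᵥ v = μ * c := by
    rw [← mulVec_mulVec, hMv, mulVec_smul, dotProduct_smul]
    rfl
  have h2 : star v ⬝ᵥ (M'ᵀ * P') *ᵥ v = (starRingEnd ℂ) μ * c := by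
    rw [← mulVec_mulVec, dotProduct_mulVec, vecMul_transpose, mulVec_star_real,
      hMv, star_smul, smul_dotProduct]
    rfl
  have heq : μ * c + (starRingEnd ℂ) μ * c = -q := by
    rw [← h1, ← h2, ← dotProduct_add, ← Matrix.add_mulVec, hmap]
    simp [q, Matrix.neg_mulVec]
  have hre : 2 * μ.re * c.re = -q.re := by
    have := congrArg Complex.re heq
    simp only [Complex.add_re, Complex.mul_re, Complex.conj_re, Complex.conj_im,
      Complex.neg_re] at this
    linarith
  have hc : 0 < c.re := pos_quadform hP hv
  have hq : 0 < q.re := pos_quadform hQ hv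
  nlinarith
end

section
/- Let L ∈ ℝ^{N×N} be symmetric with (real) eigenvalues μ₁, …, μ_N (listed with multiplicity) and let η ∈ ℝ. Then the characteristic polynomial of the block matrix M = [[0, I],[−L, −ηL]] ∈ ℝ^{2N×2N} factors as det(s I − M) = ∏_{i=1}^N (s² + η μ_i s + μ_i). -/
open Matrix Polynomial

set_option maxHeartbeats 2000000
set_option synthInstance.maxHeartbeats 400000

noncomputable section

abbrev KK := RatFunc ℝ

lemma det_key (N : ℕ) (L : Matrix (Fin N) (Fin N) ℝ) (μ : Fin N → ℝ)
    (hμ : L.charpoly = ∏ i, (X - C (μ i)))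
    (a b : KK) (hb : b ≠ 0) :
    (a • (1 : Matrix (Fin N) (Fin N) KK) + b • L.map (algebraMap ℝ KK)).det
      = ∏ i, (a + b * algebraMap ℝ KK (μ i)) := by
  set f := algebraMap ℝ KK
  set ψ : ℝ[X] →+* KK := eval₂RingHom f (-(a/b)) with hψ
  have h1 : ((charmatrix L).map ψ) = (-(a/b)) • (1 : Matrix (Fin N) (Fin N) KK) - L.map f := by
    ext i j
    by_cases h : i = j
    · subst h; simp [Matrix.one_apply, ψ]
    · simp [charmatrix_apply_ne _ _ _ h, Matrix.one_apply, h, ψ]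
  have h2 : ((charmatrix L).map ψ).det = ∏ i, ((-(a/b)) - f (μ i)) := by
    rw [← RingHom.mapMatrix_apply, ← RingHom.map_det]
    show ψ L.charpoly = _
    rw [hμ]
    simp [ψ]
  rw [h1] at h2
  have h3 : a • (1 : Matrix (Fin N) (Fin N) KK) + b • L.map f
      = b • (-((-(a/b)) • (1 : Matrix (Fin N) (Fin N) KK) - L.map f)) := by
    rw [neg_sub, smul_sub, smul_smul, mul_neg, mul_div_cancel₀ _ hb, neg_smul, sub_neg_eq_add,
      add_comm]
  rw [h3, det_smul, det_neg, h2, Fintype.card_fin, ← mul_assoc, ← mul_pow]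
  rw [show ((b * (-1) : KK)) ^ N = ∏ _i : Fin N, (b * (-1)) by
    rw [Finset.prod_const, Finset.card_univ, Fintype.card_fin]]
  rw [← Finset.prod_mul_distrib]
  refine Finset.prod_congr rfl fun i _ => ?_
  field_simp
  ring

/-- If symmetric `L` has (real) eigenvalues `μ₁, …, μ_N` listed with
multiplicity (i.e. its characteristic polynomial is `∏ᵢ (s − μᵢ)`), then the
characteristic polynomial of the block matrix `M = [[0, I],[−L, −ηL]]` factors as
`det(sI − M) = ∏ᵢ (s² + ημᵢ s + μᵢ)`. -/
theorem block_matrix_charpoly_factorization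
    (N : ℕ) (L : Matrix (Fin N) (Fin N) ℝ) (hLsymm : Lᵀ = L)
    (μ : Fin N → ℝ)
    (hμ : L.charpoly = ∏ i, (X - C (μ i)))
    (η : ℝ) :
    (Matrix.fromBlocks 0 1 (-L) (-(η • L))).charpoly
      = ∏ i, (X ^ 2 + C (η * μ i) * X + C (μ i)) := by
  apply IsFractionRing.injective ℝ[X] KK
  set φ : ℝ[X] →+* KK := algebraMap ℝ[X] KK with hφ
  set f := algebraMap ℝ KK with hf
  set x : KK := φ X with hx
  have hx0 : x ≠ 0 := by
    simp only [hx]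
    intro h
    have := IsFractionRing.injective ℝ[X] KK (h.trans (map_zero φ).symm)
    exact X_ne_zero this
  have hfc : ∀ r : ℝ, φ (C r) = f r := fun r => by
    rw [hf, IsScalarTower.algebraMap_apply ℝ ℝ[X] KK]; rfl
  -- LHS
  rw [Matrix.charpoly, RingHom.map_det, charmatrix_fromBlocks]
  have hmap : (fromBlocks (charmatrix 0) (-(1 : Matrix (Fin N) (Fin N) ℝ).map C)
      (-(-L).map C) (charmatrix (-(η • L)))).map φ
      = fromBlocks (x • 1) (-1) (L.map f) (x • 1 + (f η) • L.map f) := by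
    rw [Matrix.fromBlocks_map, Matrix.fromBlocks_inj]
    refine ⟨?_, ?_, ?_, ?_⟩
    · ext i j; by_cases h : i = j
      · subst h; simp [Matrix.one_apply, hx]
      · simp [charmatrix_apply_ne _ _ _ h, Matrix.one_apply, h]
    · ext i j; by_cases h : i = j
      · subst h; simp [Matrix.one_apply, hfc]
      · simp [Matrix.one_apply, h]
    · ext i j; simp [hfc]
    · ext i j; by_cases h : i = j
      · subst h; simp [Matrix.one_apply, hfc, _root_.map_mul, hx]
      · simp [charmatrix_apply_ne _ _ _ h, Matrix.one_apply, h, hfc, _root_.map_mul]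
  rw [RingHom.mapMatrix_apply, hmap]
  have : Invertible (x • (1 : Matrix (Fin N) (Fin N) KK)) :=
    ⟨x⁻¹ • 1, by rw [smul_mul_smul_comm, inv_mul_cancel₀ hx0, one_mul, one_smul],
      by rw [smul_mul_smul_comm, mul_inv_cancel₀ hx0, one_mul, one_smul]⟩
  rw [det_fromBlocks₁₁]
  have hinv : (⅟(x • (1 : Matrix (Fin N) (Fin N) KK))) = x⁻¹ • 1 := by
    apply invOf_eq_right_inv
    rw [smul_mul_smul_comm, mul_inv_cancel₀ hx0, one_mul, one_smul]
  rw [hinv]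
  have hD : (x • 1 + (f η) • L.map f - L.map f * (x⁻¹ • (1 : Matrix (Fin N) (Fin N) KK)) * (-1))
      = x • 1 + (f η + x⁻¹) • L.map f := by
    rw [Matrix.mul_smul, Matrix.mul_one, Matrix.mul_neg, Matrix.mul_one,
      sub_neg_eq_add, add_smul]
    abel
  rw [hD, det_smul, det_one, mul_one, Fintype.card_fin]
  have hcomb : (x • (1 : Matrix (Fin N) (Fin N) KK) + (f η + x⁻¹) • L.map f)
      = x⁻¹ • (x ^ 2 • 1 + (f η * x + 1) • L.map f) := by
    rw [smul_add, smul_smul, smul_smul]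
    congr 2
    · rw [pow_two, ← mul_assoc, inv_mul_cancel₀ hx0, one_mul]
    · rw [mul_add, mul_one, mul_comm (f η) x, ← mul_assoc, inv_mul_cancel₀ hx0, one_mul,
        add_comm]
  rw [hcomb, det_smul, Fintype.card_fin, ← mul_assoc, ← mul_pow, mul_inv_cancel₀ hx0,
    one_pow, one_mul]
  have hb : f η * x + 1 ≠ 0 := by
    have : f η * x + 1 = φ (C η * X + 1) := by
      rw [map_add, _root_.map_mul, _root_.map_one, hfc]
    rw [this]
    intro h
    have h2 := IsFractionRing.injective ℝ[X] KK (h.trans (map_zero φ).symm)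
    have := congrArg (Polynomial.eval 0) h2
    simp at this
  rw [det_key N L μ hμ (x ^ 2) (f η * x + 1) hb]
  rw [map_prod]
  refine Finset.prod_congr rfl fun i _ => ?_
  rw [map_add, map_add, map_pow, _root_.map_mul, hfc, hfc, _root_.map_mul, ← hx]
  ring

end
end

section
/- Let N be a positive integer, K = N·I − J, s ∈ ℝ^N with ∑_i s_i = 1, y_t, η ∈ ℝ, and let y : ℝ → ℝ^N be twice differentiable satisfying the closed-loop dynamics y'' = c(t)𝟙 + (1/N)(y_t K s − K y − η K y') for some scalar function c(t) (the common task-level input). Then the disagreement w(t) = Π y(t) − y_t Π s satisfies the second-order ODE w'' + η w' + w = 0. -/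
open Matrix

/-- Under the closed-loop dynamics
`y'' = c(t)𝟙 + (1/N)(y_t K s − K y − η K y')` with `K = N·I − 𝟙𝟙ᵀ` and `∑ s_i = 1`,
the disagreement `w(t) = Πy(t) − y_t Πs` (with `Π = I − (1/N)𝟙𝟙ᵀ`) satisfies the
second-order ODE `w'' + ηw' + w = 0` (stated as: `w' = Π y'` and `(Πy')' = −ηΠy' − w`). -/
theorem disagreement_satisfies_second_order_ode
    (N : ℕ) (hN : 0 < N)
    (K Pr : Matrix (Fin N) (Fin N) ℝ)
    (hK : K = (N : ℝ) • (1 : Matrix (Fin N) (Fin N) ℝ) - vecMulVec 1 1)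
    (hPr : Pr = 1 - (N : ℝ)⁻¹ • vecMulVec 1 1)
    (s : Fin N → ℝ) (hs : ∑ i, s i = 1) (yt η : ℝ)
    (c : ℝ → ℝ)
    (y dy : ℝ → Fin N → ℝ)
    (hy : ∀ t, HasDerivAt y (dy t) t)
    (hdy : ∀ t, HasDerivAt dy
        (c t • (1 : Fin N → ℝ)
          + (N : ℝ)⁻¹ • (yt • K.mulVec s - K.mulVec (y t) - η • K.mulVec (dy t))) t)
    (w : ℝ → Fin N → ℝ)
    (hw : ∀ t, w t = Pr.mulVec (y t) - yt • Pr.mulVec s) :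
    (∀ t, HasDerivAt w (Pr.mulVec (dy t)) t) ∧
    (∀ t, HasDerivAt (fun τ => Pr.mulVec (dy τ))
        (-(η • Pr.mulVec (dy t)) - w t) t) := by
  have hNne : (N : ℝ) ≠ 0 := Nat.cast_ne_zero.mpr hN.ne'
  -- the continuous linear map v ↦ Pr.mulVec v
  let L : (Fin N → ℝ) →L[ℝ] (Fin N → ℝ) :=
    LinearMap.toContinuousLinearMap Pr.mulVecLin
  have hL : ∀ v, L v = Pr.mulVec v := fun v => rfl
  -- Pr.mulVec 1 = 0
  have hPr1 : Pr.mulVec (1 : Fin N → ℝ) = 0 := by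
    subst hPr
    ext i
    simp [mulVec, dotProduct, vecMulVec, Matrix.sub_apply, Matrix.one_apply, Matrix.smul_apply,
      Finset.sum_sub_distrib, Finset.mul_sum, sub_eq_zero, mul_comm,
      inv_mul_cancel₀ hNne, mul_inv_cancel₀ hNne]
  -- J.mulVec v = (∑ v) • 1
  have hJ : ∀ v : Fin N → ℝ, (vecMulVec (1 : Fin N → ℝ) 1).mulVec v = (∑ i, v i) • 1 := by
    intro v
    ext i
    simp [mulVec, dotProduct, vecMulVec]
  -- Pr.mulVec (K.mulVec v) = N • Pr.mulVec v
  have hPrK : ∀ v : Fin N → ℝ, Pr.mulVec (K.mulVec v) = (N : ℝ) • Pr.mulVec v := by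
    intro v
    rw [hK, sub_mulVec, smul_mulVec, one_mulVec, hJ, mulVec_sub, mulVec_smul,
      mulVec_smul, hPr1, smul_zero, sub_zero]
  have h1 : ∀ t, HasDerivAt w (Pr.mulVec (dy t)) t := by
    intro t
    have := L.hasFDerivAt.comp_hasDerivAt t (hy t)
    have h2 : HasDerivAt (fun τ => Pr.mulVec (y τ)) (Pr.mulVec (dy t)) t := this
    have h3 := h2.sub_const (yt • Pr.mulVec s)
    rw [show w = fun τ => Pr.mulVec (y τ) - yt • Pr.mulVec s from funext hw]
    exact h3
  refine ⟨h1, fun t => ?_⟩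
  have h2 := L.hasFDerivAt.comp_hasDerivAt t (hdy t)
  have h3 : HasDerivAt (fun τ => Pr.mulVec (dy τ))
      (Pr.mulVec (c t • (1 : Fin N → ℝ)
        + (N : ℝ)⁻¹ • (yt • K.mulVec s - K.mulVec (y t) - η • K.mulVec (dy t)))) t := h2
  convert h3 using 1
  rw [mulVec_add, mulVec_smul, mulVec_smul, hPr1, smul_zero, zero_add,
    mulVec_sub, mulVec_sub, mulVec_smul, mulVec_smul, hPrK, hPrK, hPrK, hw]
  match_scalars <;> field_simp
end
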